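/- Let p ≥ 3 be odd and suppose the cycle C_m (m ≥ 3) has an edge-magic labeling f. If m is odd or m ≥ p, then the cycle C_{pm} has an edge-magic labeling with valence p·val(f) − 3(p−1)/2. -/

import Mathlib

open Finset

/-- Sum of the labels of the two endpoints of an (undirected) edge. -/
def edgeSum (g : ℤ → ℤ) : Sym2 ℤ → ℤ :=
  Sym2.lift ⟨fun u v => g u + g v, fun _ _ => add_comm _ _⟩

/-- `(fv, fe)` is an edge-magic labeling with valence `k` of the graph with vertex set
`Vs ⊆ ℤ` and edge set `E`: the labels form a bijection from `V ∪ E` onto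
`[1, |V| + |E|]` and every edge `uv` satisfies `fv u + fe uv + fv v = k`. -/
def IsEdgeMagicG (Vs : Finset ℤ) (E : Finset (Sym2 ℤ))
    (fv : ℤ → ℤ) (fe : Sym2 ℤ → ℤ) (k : ℤ) : Prop :=
  Vs.image fv ∪ E.image fe = Finset.Icc 1 ((Vs.card : ℤ) + (E.card : ℤ)) ∧
  ∀ u v : ℤ, s(u, v) ∈ E → fv u + fe s(u, v) + fv v = k

/-- The edge set of the cycle `C_n` on the vertex set `[1,n] ⊆ ℤ`. -/
noncomputable def cycleEdges (n : ℕ) : Finset (Sym2 ℤ) :=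
  (Finset.Icc (1 : ℤ) (n : ℤ)).image fun i => s(i, if i = (n : ℤ) then 1 else i + 1)

/-!
Write `p = 2t + 1` and run `p` times around `C_m` to get `C_{pm}`. Each label `ℓ` of `C_m` is
split into the block `p(ℓ - 1) + 1, …, pℓ`, whose `p` labels go to the `p` elements of `C_{pm}`
lying over the element labelled `ℓ`; this is a bijection onto `[1, 2pm]` as soon as the offsets
inside the block are pairwise distinct over every element of `C_m`.

The offsets come from a height `h` on `ℕ` that moves by `±1` modulo `p` at each step and grows by
exactly `1` per lap: vertex `j` gets `h j / 2 mod p`, and the edge `j (j + 1)` gets `3t` minus the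
offsets of its ends. Over a fixed vertex the heights run through all residues modulo `p`, hence so
do the halves; over a fixed edge the two halves add up to `x/2 + (x+1)/2 ≡ x + 1/2` and stay in
`[t, 3t]`, so the edge offsets are again distinct and in range. The three offsets of every edge
add up to `3t`, which gives the valence `p(val(f) - 3) + 3t + 3 = p·val(f) - 3t`. Such a height
exists when `m` is odd, or when it can climb to `p` before coming back, i.e. `m ≥ p`.
-/

theorem Int.ModEq.of_mul_left_of_mul_modEq_one {n c d a b : ℤ} (hcd : c * d ≡ 1 [ZMOD n])
    (h : c * a ≡ c * b [ZMOD n]) : a ≡ b [ZMOD n] :=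
  calc a = 1 * a := (one_mul a).symm
    _ ≡ c * d * a [ZMOD n] := (hcd.symm.mul_right a)
    _ = d * (c * a) := by ring
    _ ≡ d * (c * b) [ZMOD n] := h.mul_left d
    _ = c * d * b := by ring
    _ ≡ 1 * b [ZMOD n] := hcd.mul_right b
    _ = b := one_mul b

theorem eq_and_eq_of_mul_add_eq_mul_add {P q q' r r' : ℤ} (hr : 0 ≤ r ∧ r < P)
    (hr' : 0 ≤ r' ∧ r' < P) (h : P * q + r = P * q' + r') : q = q' ∧ r = r' := by
  have hP : 0 < P := by omega
  have h1 := (Int.ediv_emod_unique (q := q) hP).mpr ⟨rfl, hr⟩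
  have h2 := (Int.ediv_emod_unique (q := q') hP).mpr ⟨rfl, hr'⟩
  rw [show r + P * q = r' + P * q' by linarith] at h1
  exact ⟨h1.1.symm.trans h2.1, h1.2.symm.trans h2.2⟩

theorem mul_add_add_one_mem_Icc {P q r M : ℤ} (hq : 0 ≤ q ∧ q < M) (hr : 0 ≤ r ∧ r < P) :
    P * q + r + 1 ∈ Icc 1 (P * M) := by
  rw [mem_Icc]
  constructor <;> nlinarith

theorem Nat.ModEq.mul_left_of_div_modEq {n m i j : ℕ} (hmod : i ≡ j [MOD m])
    (hdiv : i / m ≡ j / m [MOD n]) : i ≡ j [MOD n * m] := by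
  unfold Nat.ModEq at *
  rw [mul_comm, Nat.mod_mul, Nat.mod_mul, hmod, hdiv]

theorem image_union_image_eq_Icc_iff {α β : Type*} {s : Finset α} {s' : Finset β}
    {f : α → ℤ} {g : β → ℤ} :
    s.image f ∪ s'.image g = Icc 1 ((#s : ℤ) + #s') ↔
      (∀ x ∈ s, f x ∈ Icc 1 ((#s : ℤ) + #s')) ∧ (∀ y ∈ s', g y ∈ Icc 1 ((#s : ℤ) + #s')) ∧
        Set.InjOn f s ∧ Set.InjOn g s' ∧ Disjoint (s.image f) (s'.image g) := by
  constructor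
  · intro h
    have hcard : #(s.image f ∪ s'.image g) = #s + #s' := by rw [h, Int.card_Icc]; omega
    have hf := card_image_le (s := s) (f := f)
    have hg := card_image_le (s := s') (f := g)
    have hfg := card_union_le (s.image f) (s'.image g)
    exact ⟨fun x hx => h ▸ mem_union_left _ (mem_image_of_mem f hx),
      fun y hy => h ▸ mem_union_right _ (mem_image_of_mem g hy),
      card_image_iff.mp (by omega), card_image_iff.mp (by omega),
      card_union_eq_card_add_card.mp (by omega)⟩
  · rintro ⟨hf, hg, hfi, hgi, hd⟩
    apply eq_of_subset_of_card_le (union_subset (image_subset_iff.2 hf) (image_subset_iff.2 hg))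
    rw [card_union_of_disjoint hd, card_image_of_injOn hfi, card_image_of_injOn hgi,
      Int.card_Icc]
    omega

def cycleEdge (n : ℕ) (i : ℤ) : Sym2 ℤ := s(i, if i = n then 1 else i + 1)

theorem cycleEdges_eq_image (n : ℕ) : cycleEdges n = (Icc 1 (n : ℤ)).image (cycleEdge n) := rfl

theorem cycleEdge_injOn {n : ℕ} (hn : 3 ≤ n) : Set.InjOn (cycleEdge n) (Icc 1 (n : ℤ)) := by
  intro a ha b hb h
  simp only [coe_Icc, Set.mem_Icc] at ha hb
  simp only [cycleEdge, Sym2.eq_iff] at h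
  split_ifs at h <;> omega

theorem card_cycleEdges {n : ℕ} (hn : 3 ≤ n) : #(cycleEdges n) = n := by
  rw [cycleEdges_eq_image, card_image_of_injOn (cycleEdge_injOn hn), Int.card_Icc]
  omega

theorem mod_add_one_mem_Icc {m : ℕ} (hm : 0 < m) (j : ℕ) :
    ((j % m : ℕ) : ℤ) + 1 ∈ Icc 1 (m : ℤ) := by
  have := Nat.mod_lt j hm
  simp only [mem_Icc]
  omega

theorem succ_mod_add_one {m : ℕ} (hm : 0 < m) (j : ℕ) :
    (((j + 1) % m : ℕ) : ℤ) + 1 =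
      if ((j % m : ℕ) : ℤ) + 1 = m then 1 else ((j % m : ℕ) : ℤ) + 1 + 1 := by
  have hj : j + 1 = (j % m + 1) + m * (j / m) := by have := Nat.mod_add_div j m; omega
  rw [hj, Nat.add_mul_mod_self_left]
  split_ifs with h
  · rw [show j % m + 1 = m by exact_mod_cast h, Nat.mod_self]
    rfl
  · rw [Nat.mod_eq_of_lt (by have := Nat.mod_lt j hm; omega)]
    push_cast
    ring

/-- An edge-magic labeling of `C_n` read along the cycle: `v j` labels vertex `j` and `e j` the
edge from vertex `j` to vertex `j + 1`, indices taken modulo `n`. -/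
structure IsCyclicMagic (n : ℕ) (v e : ℕ → ℤ) (k : ℤ) : Prop where
  periodic_v : Function.Periodic v n
  periodic_e : Function.Periodic e n
  magic : ∀ j, v j + e j + v (j + 1) = k
  v_mem : ∀ j, v j ∈ Icc 1 (2 * n : ℤ)
  e_mem : ∀ j, e j ∈ Icc 1 (2 * n : ℤ)
  modEq_of_v_eq : ∀ {i j}, v i = v j → i ≡ j [MOD n]
  modEq_of_e_eq : ∀ {i j}, e i = e j → i ≡ j [MOD n]
  v_ne_e : ∀ i j, v i ≠ e j

theorem IsEdgeMagicG.isCyclicMagic {m : ℕ} (hm : 3 ≤ m) {fv : ℤ → ℤ} {fe : Sym2 ℤ → ℤ} {κ : ℤ}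
    (hf : IsEdgeMagicG (Icc 1 (m : ℤ)) (cycleEdges m) fv fe κ) :
    IsCyclicMagic m (fun j => fv ((j % m : ℕ) + 1))
      (fun j => fe (cycleEdge m ((j % m : ℕ) + 1))) κ := by
  obtain ⟨hbij, hmagic⟩ := hf
  have hVm := mod_add_one_mem_Icc (m := m) (by omega)
  have hEm (j : ℕ) : cycleEdge m ((j % m : ℕ) + 1) ∈ cycleEdges m :=
    mem_image_of_mem _ (hVm j)
  have hcard : ((#(Icc 1 (m : ℤ)) : ℕ) : ℤ) + #(cycleEdges m) = 2 * m := by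
    rw [card_cycleEdges hm, Int.card_Icc]; omega
  rw [image_union_image_eq_Icc_iff, hcard] at hbij
  obtain ⟨hfv, hfe, hfvi, hfei, hdisj⟩ := hbij
  have hmodEq {i j : ℕ} (h : ((i % m : ℕ) : ℤ) + 1 = ((j % m : ℕ) : ℤ) + 1) : i ≡ j [MOD m] := by
    unfold Nat.ModEq; omega
  refine ⟨fun j => ?_, fun j => ?_, fun j => ?_, fun j => hfv _ (hVm j), fun j => hfe _ (hEm j),
    fun h => hmodEq (hfvi (hVm _) (hVm _) h),
    fun h => hmodEq (cycleEdge_injOn hm (hVm _) (hVm _) (hfei (hEm _) (hEm _) h)),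
    fun i j h => disjoint_left.mp hdisj (mem_image_of_mem _ (hVm i))
      (h ▸ mem_image_of_mem _ (hEm j))⟩
  · simp only [Nat.add_mod_right]
  · simp only [Nat.add_mod_right]
  · simp only [succ_mod_add_one (show 0 < m by omega)]
    exact hmagic _ _ (hEm j)

/-- An edge of `C_N` is labelled through its index, which `invFunOn` recovers. -/
noncomputable def cycleEdgeLabel (N : ℕ) (e : ℕ → ℤ) (s : Sym2 ℤ) : ℤ :=
  e (Function.invFunOn (cycleEdge N) (Icc 1 (N : ℤ)) s - 1).toNat

theorem cycleEdgeLabel_cycleEdge {N : ℕ} (hN : 3 ≤ N) (e : ℕ → ℤ) {x : ℤ}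
    (hx : x ∈ Icc 1 (N : ℤ)) : cycleEdgeLabel N e (cycleEdge N x) = e (x - 1).toNat := by
  rw [cycleEdgeLabel, (cycleEdge_injOn hN).leftInvOn_invFunOn hx]

theorem IsCyclicMagic.image_union_image_eq_Icc {N : ℕ} (hN : 3 ≤ N) {v e : ℕ → ℤ} {k : ℤ}
    (hve : IsCyclicMagic N v e k) :
    (Icc 1 (N : ℤ)).image (fun x => v (x - 1).toNat) ∪ (cycleEdges N).image (cycleEdgeLabel N e) =
      Icc 1 ((#(Icc 1 (N : ℤ)) : ℤ) + #(cycleEdges N)) := by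
  have hcard : ((#(Icc 1 (N : ℤ)) : ℕ) : ℤ) + #(cycleEdges N) = 2 * N := by
    rw [card_cycleEdges hN, Int.card_Icc]; omega
  have hge {x : ℤ} (hx : x ∈ Icc 1 (N : ℤ)) := cycleEdgeLabel_cycleEdge hN e hx
  rw [image_union_image_eq_Icc_iff, hcard, cycleEdges_eq_image]
  refine ⟨fun x _ => hve.v_mem _, ?_, ?_, ?_, ?_⟩
  · intro s hs
    obtain ⟨x, hx, rfl⟩ := mem_image.mp hs
    rw [hge hx]
    exact hve.e_mem _
  · intro x hx y hy hxy
    simp only [coe_Icc, Set.mem_Icc] at hx hy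
    have := (hve.modEq_of_v_eq hxy).eq_of_lt_of_lt (by omega) (by omega)
    omega
  · intro s hs s' hs' hss'
    obtain ⟨x, hx, rfl⟩ := mem_image.mp hs
    obtain ⟨y, hy, rfl⟩ := mem_image.mp hs'
    rw [hge hx, hge hy] at hss'
    rw [mem_Icc] at hx hy
    have := (hve.modEq_of_e_eq hss').eq_of_lt_of_lt (by omega) (by omega)
    rw [show x = y by omega]
  · rw [disjoint_left]
    intro a ha ha'
    obtain ⟨x, -, rfl⟩ := mem_image.mp ha
    obtain ⟨s, hs, hsx⟩ := mem_image.mp ha'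
    obtain ⟨y, hy, rfl⟩ := mem_image.mp hs
    rw [hge hy] at hsx
    exact hve.v_ne_e _ _ hsx.symm

theorem IsCyclicMagic.exists_isEdgeMagicG {N : ℕ} (hN : 3 ≤ N) {v e : ℕ → ℤ} {k : ℤ}
    (hve : IsCyclicMagic N v e k) :
    ∃ gv ge, IsEdgeMagicG (Icc 1 (N : ℤ)) (cycleEdges N) gv ge k := by
  have hmagic {x : ℤ} (hx : x ∈ Icc 1 (N : ℤ)) :
      v (x - 1).toNat + cycleEdgeLabel N e (cycleEdge N x) +
        v ((if x = N then 1 else x + 1) - 1).toNat = k := by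
    rw [cycleEdgeLabel_cycleEdge hN e hx, ← hve.magic]
    rw [mem_Icc] at hx
    split_ifs with hxN
    · rw [show (x - 1).toNat + 1 = 0 + N by omega, hve.periodic_v]
      rfl
    · congr 3
      omega
  refine ⟨fun x => v (x - 1).toNat, cycleEdgeLabel N e, hve.image_union_image_eq_Icc hN, ?_⟩
  intro u w huw
  rw [cycleEdges_eq_image] at huw
  obtain ⟨x, hx, hxuw⟩ := mem_image.mp huw
  rcases Sym2.eq_iff.mp hxuw with ⟨rfl, rfl⟩ | ⟨rfl, rfl⟩
  · exact hmagic hx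
  · have := hmagic hx
    rw [Sym2.eq_swap]
    simp only [cycleEdge] at this ⊢
    linarith

def AdjacentMod (n x y : ℤ) : Prop := y ≡ x + 1 [ZMOD n] ∨ x ≡ y + 1 [ZMOD n]

theorem AdjacentMod.symm {n x y : ℤ} (h : AdjacentMod n x y) : AdjacentMod n y x := Or.symm h

theorem adjacentMod_add_right_iff {n x y : ℤ} (a : ℤ) :
    AdjacentMod n (x + a) (y + a) ↔ AdjacentMod n x y := by
  simp only [AdjacentMod, Int.modEq_iff_dvd]
  ring_nf

section halfMod

variable {t : ℕ}

/-- Since `2 * (t + 1) ≡ 1`, this is the residue of `x / 2` modulo `2 * t + 1`. -/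
def halfMod (t : ℕ) (x : ℤ) : ℤ := (t + 1) * x % (2 * t + 1)

theorem halfMod_nonneg (x : ℤ) : 0 ≤ halfMod t x := Int.emod_nonneg _ (by omega)

theorem halfMod_lt (x : ℤ) : halfMod t x < 2 * t + 1 := Int.emod_lt_of_pos _ (by omega)

theorem halfMod_eq_of_modEq {x y : ℤ} (h : x ≡ y [ZMOD 2 * t + 1]) : halfMod t x = halfMod t y :=
  h.mul_left _

theorem succ_mul_two_modEq_one : ((t : ℤ) + 1) * 2 ≡ 1 [ZMOD 2 * t + 1] :=
  Int.modEq_iff_dvd.mpr ⟨-1, by ring⟩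

theorem modEq_of_halfMod_eq {x y : ℤ} (h : halfMod t x = halfMod t y) : x ≡ y [ZMOD 2 * t + 1] :=
  Int.ModEq.of_mul_left_of_mul_modEq_one succ_mul_two_modEq_one h

theorem halfMod_add_one (x : ℤ) :
    halfMod t (x + 1) = if halfMod t x < t then halfMod t x + (t + 1) else halfMod t x - t := by
  have h0 := halfMod_nonneg (t := t) x
  have h1 := halfMod_lt (t := t) x
  have hsucc : halfMod t (x + 1) = (halfMod t x + (t + 1)) % (2 * t + 1) := by
    rw [halfMod, halfMod, Int.emod_add_emod, mul_add_one]
  rw [hsucc]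
  split_ifs
  · exact Int.emod_eq_of_lt (by omega) (by omega)
  · rw [show halfMod t x + (t + 1) = halfMod t x - t + (2 * t + 1) by ring, Int.add_emod_right]
    exact Int.emod_eq_of_lt (by omega) (by omega)

theorem halfMod_add_halfMod_add_one_mem (x : ℤ) :
    t ≤ halfMod t x + halfMod t (x + 1) ∧ halfMod t x + halfMod t (x + 1) ≤ 3 * t := by
  have h0 := halfMod_nonneg (t := t) x
  have h1 := halfMod_lt (t := t) x
  rw [halfMod_add_one]
  split_ifs <;> omega

theorem modEq_of_halfMod_add_halfMod_add_one_eq {x y : ℤ}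
    (h : halfMod t x + halfMod t (x + 1) = halfMod t y + halfMod t (y + 1)) :
    x ≡ y [ZMOD 2 * t + 1] := by
  have hsum (z : ℤ) : halfMod t z + halfMod t (z + 1) ≡ (t + 1) * (2 * z + 1) [ZMOD 2 * t + 1] :=
    calc halfMod t z + halfMod t (z + 1)
        ≡ (t + 1) * z + (t + 1) * (z + 1) [ZMOD 2 * t + 1] :=
          (Int.mod_modEq _ _).add (Int.mod_modEq _ _)
      _ = (t + 1) * (2 * z + 1) := by ring
  have hodd : 2 * x + 1 ≡ 2 * y + 1 [ZMOD 2 * t + 1] :=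
    Int.ModEq.of_mul_left_of_mul_modEq_one succ_mul_two_modEq_one
      ((hsum x).symm.trans (h ▸ hsum y))
  exact Int.ModEq.of_mul_left_of_mul_modEq_one (d := t + 1) (Int.modEq_iff_dvd.mpr ⟨-1, by ring⟩)
    (Int.ModEq.add_right_cancel' 1 hodd)

theorem halfMod_add_halfMod_mem {x y : ℤ} (hxy : AdjacentMod (2 * t + 1) x y) :
    t ≤ halfMod t x + halfMod t y ∧ halfMod t x + halfMod t y ≤ 3 * t := by
  rcases hxy with hy | hx
  · rw [halfMod_eq_of_modEq hy]
    exact halfMod_add_halfMod_add_one_mem x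
  · rw [halfMod_eq_of_modEq hx, add_comm]
    exact halfMod_add_halfMod_add_one_mem y

theorem modEq_of_halfMod_add_halfMod_eq {x y a b : ℤ} (hxy : AdjacentMod (2 * t + 1) x y)
    (h : halfMod t (x + a) + halfMod t (y + a) = halfMod t (x + b) + halfMod t (y + b)) :
    a ≡ b [ZMOD 2 * t + 1] := by
  wlog hy : y ≡ x + 1 [ZMOD 2 * t + 1] generalizing x y
  · exact this hxy.symm (by linarith) (hxy.resolve_left hy)
  have hshift (c : ℤ) : halfMod t (y + c) = halfMod t (x + c + 1) :=
    halfMod_eq_of_modEq (by simpa only [add_right_comm] using hy.add_right c)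
  rw [hshift, hshift] at h
  exact Int.ModEq.add_left_cancel' x (modEq_of_halfMod_add_halfMod_add_one_eq h)

end halfMod

section height

variable {m : ℕ} {h : ℕ → ℤ}

theorem height_add_mul (hshift : ∀ j, h (j + m) = h j + 1) (j a : ℕ) :
    h (j + m * a) = h j + a := by
  induction a with
  | zero => simp
  | succ a ih => rw [mul_add_one, ← add_assoc, hshift, ih]; push_cast; ring

theorem height_eq_mod_add_div (hshift : ∀ j, h (j + m) = h j + 1) (j : ℕ) :
    h j = h (j % m) + (j / m : ℕ) := by
  conv_lhs => rw [← Nat.mod_add_div j m]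
  exact height_add_mul hshift _ _

theorem height_succ_eq_mod_add_div (hshift : ∀ j, h (j + m) = h j + 1) (j : ℕ) :
    h (j + 1) = h (j % m + 1) + (j / m : ℕ) := by
  rw [← height_add_mul hshift]
  congr 1
  have := Nat.mod_add_div j m
  omega

theorem adjacentMod_height_of_lt {n : ℤ} (hm : 0 < m) (hshift : ∀ j, h (j + m) = h j + 1)
    (hlt : ∀ j < m, AdjacentMod n (h j) (h (j + 1))) (j : ℕ) :
    AdjacentMod n (h j) (h (j + 1)) := by
  rw [height_eq_mod_add_div hshift j, height_succ_eq_mod_add_div hshift j,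
    adjacentMod_add_right_iff]
  exact hlt _ (Nat.mod_lt j hm)

/-- `c` is the turning point of the zigzag `r ↦ min r (c - r)` run through in every lap of
`exists_height`: its last value, at `r = m - 1`, has to be adjacent to `1`, the height at which
the next lap starts. -/
theorem exists_turningPoint {p m : ℕ} (hp : Odd p) (hcond : Odd m ∨ p ≤ m) :
    ∃ c : ℤ, 0 ≤ c ∧ Even c ∧ AdjacentMod p (min ((m : ℤ) - 1) (c - (m - 1))) 1 := by
  obtain ⟨l, hl⟩ := hp
  rcases Nat.even_or_odd m with ⟨k, hk⟩ | ⟨k, hk⟩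
  · have hpm : p + 1 ≤ m := by rcases hcond with ⟨k', hk'⟩ | h <;> omega
    refine ⟨m + p + 1, by omega, ⟨k + l + 1, by omega⟩, ?_⟩
    rcases (by omega : min ((m : ℤ) - 1) (m + p + 1 - (m - 1)) = p ∨
        min ((m : ℤ) - 1) (m + p + 1 - (m - 1)) = p + 2) with hmin | hmin <;> rw [hmin]
    · exact Or.inl (Int.modEq_iff_dvd.mpr ⟨1, by ring⟩)
    · exact Or.inr (Int.modEq_iff_dvd.mpr ⟨-1, by ring⟩)
  · refine ⟨m + 1, by omega, ⟨k + 1, by omega⟩, ?_⟩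
    rcases (by omega : min ((m : ℤ) - 1) (m + 1 - (m - 1)) = 0 ∨
        min ((m : ℤ) - 1) (m + 1 - (m - 1)) = 2) with hmin | hmin <;> rw [hmin]
    · exact Or.inl (by norm_num)
    · exact Or.inr (by norm_num)

theorem exists_height {p m : ℕ} (hp : Odd p) (hm : 0 < m) (hcond : Odd m ∨ p ≤ m) :
    ∃ h : ℕ → ℤ, (∀ j, h (j + m) = h j + 1) ∧ ∀ j, AdjacentMod p (h j) (h (j + 1)) := by
  obtain ⟨c, hc0, ⟨c', hc'⟩, hwrap⟩ := exists_turningPoint hp hcond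
  set A : ℕ → ℤ := fun r => min (r : ℤ) (c - r) with hA
  have hshift (j : ℕ) : A ((j + m) % m) + ((j + m) / m : ℕ) = A (j % m) + (j / m : ℕ) + 1 := by
    rw [Nat.add_mod_right, Nat.add_div_right _ hm]
    push_cast
    ring
  refine ⟨fun j => A (j % m) + (j / m : ℕ), hshift, adjacentMod_height_of_lt hm hshift ?_⟩
  intro j hj
  rcases (by omega : j + 1 < m ∨ j + 1 = m) with hj1 | hj1
  · simp only [Nat.mod_eq_of_lt hj, Nat.mod_eq_of_lt hj1, Nat.div_eq_of_lt hj,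
      Nat.div_eq_of_lt hj1, hA, Nat.cast_zero, add_zero]
    rcases (by omega : min ((j + 1 : ℕ) : ℤ) (c - (j + 1 : ℕ)) = min (j : ℤ) (c - j) + 1 ∨
        min (j : ℤ) (c - j) = min ((j + 1 : ℕ) : ℤ) (c - (j + 1 : ℕ)) + 1) with hstep | hstep
    · exact Or.inl (by rw [hstep])
    · exact Or.inr (by rw [hstep])
  · simp only [hj1, Nat.mod_self, Nat.div_self hm, Nat.mod_eq_of_lt hj, Nat.div_eq_of_lt hj, hA,
      Nat.cast_zero, Nat.cast_one, add_zero, sub_zero, min_eq_left hc0, zero_add]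
    rwa [show (j : ℤ) = m - 1 by omega]

theorem halfMod_height_add_mul {t : ℕ} (hshift : ∀ j, h (j + m) = h j + 1) (j : ℕ) :
    halfMod t (h (j + (2 * t + 1) * m)) = halfMod t (h j) := by
  rw [mul_comm, height_add_mul hshift]
  exact halfMod_eq_of_modEq (Int.modEq_iff_dvd.mpr ⟨-1, by push_cast; ring⟩)

theorem modEq_mul_of_halfMod_height_eq {t : ℕ} (hshift : ∀ j, h (j + m) = h j + 1) {i j : ℕ}
    (hmod : i ≡ j [MOD m]) (hij : halfMod t (h i) = halfMod t (h j)) :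
    i ≡ j [MOD (2 * t + 1) * m] := by
  rw [height_eq_mod_add_div hshift i, height_eq_mod_add_div hshift j, ← hmod] at hij
  refine hmod.mul_left_of_div_modEq (Int.natCast_modEq_iff.mp ?_)
  push_cast
  exact Int.ModEq.add_left_cancel' _ (modEq_of_halfMod_eq hij)

theorem modEq_mul_of_halfMod_add_halfMod_height_eq {t : ℕ} (hshift : ∀ j, h (j + m) = h j + 1)
    (hstep : ∀ j, AdjacentMod (2 * t + 1) (h j) (h (j + 1))) {i j : ℕ} (hmod : i ≡ j [MOD m])
    (hij : halfMod t (h i) + halfMod t (h (i + 1)) = halfMod t (h j) + halfMod t (h (j + 1))) :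
    i ≡ j [MOD (2 * t + 1) * m] := by
  rw [height_eq_mod_add_div hshift i, height_eq_mod_add_div hshift j,
    height_succ_eq_mod_add_div hshift i, height_succ_eq_mod_add_div hshift j, ← hmod] at hij
  refine hmod.mul_left_of_div_modEq (Int.natCast_modEq_iff.mp ?_)
  push_cast
  exact modEq_of_halfMod_add_halfMod_eq (hstep (i % m)) hij

end height

/-- Vertex `j` of the blown-up cycle lies over vertex `j mod m` of `C_m`, and each old label `ℓ`
is refined into the block `(2t+1)(ℓ-1) + 1, …, (2t+1)ℓ`. The offsets in `[0, 2t]` are chosen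
from the height `h` so that those of an edge and its two ends add up to `3t`. -/
def blowupV (t : ℕ) (v h : ℕ → ℤ) (j : ℕ) : ℤ :=
  (2 * t + 1) * (v j - 1) + halfMod t (h j) + 1

def blowupE (t : ℕ) (e h : ℕ → ℤ) (j : ℕ) : ℤ :=
  (2 * t + 1) * (e j - 1) + (3 * t - (halfMod t (h j) + halfMod t (h (j + 1)))) + 1

theorem IsCyclicMagic.blowup {m t : ℕ} {v e h : ℕ → ℤ} {κ : ℤ} (hve : IsCyclicMagic m v e κ)
    (hshift : ∀ j, h (j + m) = h j + 1)
    (hstep : ∀ j, AdjacentMod (2 * t + 1) (h j) (h (j + 1))) :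
    IsCyclicMagic ((2 * t + 1) * m) (blowupV t v h) (blowupE t e h)
      ((2 * t + 1) * κ - 3 * t) := by
  have hhalf := halfMod_height_add_mul (t := t) hshift
  have hv : Function.Periodic v ((2 * t + 1) * m) := by
    simpa only [Nat.cast_id] using hve.periodic_v.nat_mul (2 * t + 1)
  have he : Function.Periodic e ((2 * t + 1) * m) := by
    simpa only [Nat.cast_id] using hve.periodic_e.nat_mul (2 * t + 1)
  have hvOffset (j : ℕ) := And.intro (halfMod_nonneg (t := t) (h j)) (halfMod_lt (t := t) (h j))
  have heOffset (j : ℕ) : 0 ≤ 3 * (t : ℤ) - (halfMod t (h j) + halfMod t (h (j + 1))) ∧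
      3 * (t : ℤ) - (halfMod t (h j) + halfMod t (h (j + 1))) < 2 * t + 1 := by
    have := halfMod_add_halfMod_mem (hstep j)
    omega
  have hcard : (2 * ((2 * t + 1) * m : ℕ) : ℤ) = (2 * t + 1) * (2 * m) := by push_cast; ring
  refine ⟨fun j => ?_, fun j => ?_, fun j => ?_, fun j => ?_, fun j => ?_,
    fun {i j} hij => ?_, fun {i j} hij => ?_, fun i j hij => ?_⟩
  · simp only [blowupV]
    rw [hv j, hhalf j]
  · simp only [blowupE]
    rw [he j, hhalf j, add_right_comm j, hhalf (j + 1)]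
  · simp only [blowupV, blowupE]
    linear_combination (2 * t + 1 : ℤ) * hve.magic j
  · have := mem_Icc.mp (hve.v_mem j)
    rw [hcard]
    exact mul_add_add_one_mem_Icc ⟨by omega, by omega⟩ (hvOffset j)
  · have := mem_Icc.mp (hve.e_mem j)
    rw [hcard]
    exact mul_add_add_one_mem_Icc ⟨by omega, by omega⟩ (heOffset j)
  · obtain ⟨hvij, hhij⟩ := eq_and_eq_of_mul_add_eq_mul_add (q := v i - 1) (q' := v j - 1)
      (hvOffset i) (hvOffset j) (by simp only [blowupV] at hij; linarith)
    exact modEq_mul_of_halfMod_height_eq hshift (hve.modEq_of_v_eq (by linarith)) hhij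
  · obtain ⟨heij, hhij⟩ := eq_and_eq_of_mul_add_eq_mul_add (q := e i - 1) (q' := e j - 1)
      (heOffset i) (heOffset j) (by simp only [blowupE] at hij; linarith)
    exact modEq_mul_of_halfMod_add_halfMod_height_eq hshift hstep
      (hve.modEq_of_e_eq (by linarith)) (by linarith)
  · obtain ⟨hlabel, -⟩ := eq_and_eq_of_mul_add_eq_mul_add (q := v i - 1) (q' := e j - 1)
      (hvOffset i) (heOffset j) (by simp only [blowupV, blowupE] at hij; linarith)
    exact hve.v_ne_e i j (by linarith)

theorem stmt17_general (p m : ℕ) (hpodd : Odd p) (hm3 : 3 ≤ m)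
    (hcond : Odd m ∨ p ≤ m)
    (fv : ℤ → ℤ) (fe : Sym2 ℤ → ℤ) (κ : ℤ)
    (hf : IsEdgeMagicG (Finset.Icc (1 : ℤ) (m : ℤ)) (cycleEdges m) fv fe κ) :
    ∃ gv ge,
      IsEdgeMagicG (Finset.Icc (1 : ℤ) ((p * m : ℕ) : ℤ)) (cycleEdges (p * m)) gv ge
        ((p : ℤ) * κ - 3 * (((p : ℤ) - 1) / 2)) := by
  obtain ⟨h, hshift, hstep⟩ := exists_height hpodd (by omega) hcond
  obtain ⟨t, rfl⟩ := hpodd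
  have hvalence : ((2 * t + 1 : ℕ) : ℤ) * κ - 3 * ((((2 * t + 1 : ℕ) : ℤ) - 1) / 2) =
      (2 * t + 1) * κ - 3 * t := by
    push_cast
    rw [add_sub_cancel_right, Int.mul_ediv_cancel_left _ two_ne_zero]
  rw [hvalence]
  push_cast at hstep
  exact ((hf.isCyclicMagic hm3).blowup hshift hstep).exists_isEdgeMagicG (by nlinarith)

/-- Let `p ≥ 3` be odd and suppose the cycle `C_m` (`m ≥ 3`) has an edge-magic labeling
`f`. If `m` is odd or `m ≥ p`, then `C_{pm}` has an edge-magic labeling with valence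
`p·val(f) - 3(p-1)/2`. -/
theorem stmt17 (p m : ℕ) (hp3 : 3 ≤ p) (hpodd : Odd p) (hm3 : 3 ≤ m)
    (hcond : Odd m ∨ p ≤ m)
    (fv : ℤ → ℤ) (fe : Sym2 ℤ → ℤ) (κ : ℤ)
    (hf : IsEdgeMagicG (Finset.Icc (1 : ℤ) (m : ℤ)) (cycleEdges m) fv fe κ) :
    ∃ gv ge,
      IsEdgeMagicG (Finset.Icc (1 : ℤ) ((p * m : ℕ) : ℤ)) (cycleEdges (p * m)) gv ge
        ((p : ℤ) * κ - 3 * (((p : ℤ) - 1) / 2)) :=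
  stmt17_general p m hpodd hm3 hcond fv fe κ hf
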